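/- In an Osborn loop Q, for every x ∈ Q one has x^λ·(x·(x^ρ)^ρ) = x. -/
import Mathlib


/-- A loop: a type with a binary operation `*` and identity `1` such that all
left and right translations are bijective (witnessed by the two division
operations `ldiv` (`x \ z`) and `rdiv` (`z / y`)). -/
class LoopStr (Q : Type*) extends Mul Q, One Q where
  one_mul : ∀ x : Q, 1 * x = x
  mul_one : ∀ x : Q, x * 1 = x
  /-- `ldiv a b = a \ b`, the unique `y` with `a * y = b`. -/
  ldiv : Q → Q → Q
  /-- `rdiv b a = b / a`, the unique `x` with `x * a = b`. -/
  rdiv : Q → Q → Q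
  mul_ldiv : ∀ a b : Q, a * ldiv a b = b
  ldiv_mul : ∀ a b : Q, ldiv a (a * b) = b
  rdiv_mul : ∀ a b : Q, rdiv a b * b = a
  mul_rdiv : ∀ a b : Q, rdiv (a * b) b = a

namespace LoopStr

variable {Q : Type*} [LoopStr Q]

/-- `x^λ`, the unique left inverse of `x` : `x^λ * x = 1`. -/
def lInv (x : Q) : Q := rdiv 1 x

/-- `x^ρ`, the unique right inverse of `x` : `x * x^ρ = 1`. -/
def rInv (x : Q) : Q := ldiv x 1

/-- A loop is Osborn if `x * (((x^λ * y) * z) * x) = y * (z * x)` for all `x,y,z`. -/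
def IsOsborn (Q : Type*) [LoopStr Q] : Prop :=
  ∀ x y z : Q, x * (((lInv x * y) * z) * x) = y * (z * x)

end LoopStr

open LoopStr

section Aux

variable {Q : Type*} [LoopStr Q]

lemma loop_left_cancel (a : Q) {b c : Q} (hbc : a * b = a * c) : b = c := by
  rw [← LoopStr.ldiv_mul a b, hbc, LoopStr.ldiv_mul]

lemma loop_right_cancel (a : Q) {b c : Q} (hbc : b * a = c * a) : b = c := by
  rw [← LoopStr.mul_rdiv b a, hbc, LoopStr.mul_rdiv]

lemma lInv_mul (x : Q) : lInv x * x = 1 := LoopStr.rdiv_mul 1 x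

lemma mul_rInv (x : Q) : x * rInv x = 1 := LoopStr.mul_ldiv x 1

lemma lInv_rInv (x : Q) : lInv (rInv x) = x := by
  have h := LoopStr.mul_rdiv x (rInv x)
  rw [mul_rInv x] at h
  exact h

end Aux

/-- in an Osborn loop, `x^λ·(x·(x^ρ)^ρ) = x`. -/
theorem stmt9 (Q : Type*) [LoopStr Q] (h : IsOsborn Q) :
    ∀ x : Q, lInv x * (x * rInv (rInv x)) = x := by
  intro x
  -- S1 : x * ((x^λ * y) * x) = y * x
  have S1 : ∀ a y : Q, a * ((lInv a * y) * a) = y * a := by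
    intro a y
    have := h a y 1
    rwa [LoopStr.mul_one, LoopStr.one_mul] at this
  -- S3 : x^ρ * ((x * v) * x^ρ) = v * x^ρ
  have S3 : ∀ v : Q, rInv x * ((x * v) * rInv x) = v * rInv x := by
    intro v
    have := S1 (rInv x) v
    rwa [lInv_rInv] at this
  -- K : (x*x) * x^ρ = x^ρρ
  have K : (x * x) * rInv x = rInv (rInv x) := by
    have h1 : rInv x * ((x * x) * rInv x) = 1 := by
      rw [S3 x, mul_rInv]
    have h2 : rInv x * rInv (rInv x) = 1 := mul_rInv (rInv x)
    exact loop_left_cancel (rInv x) (h1.trans h2.symm)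
  -- S2 : x^ρ * (((x*y)*x) * x^ρ) = y
  have S2 : ∀ y : Q, rInv x * (((x * y) * x) * rInv x) = y := by
    intro y
    have := h (rInv x) y x
    rwa [lInv_rInv, mul_rInv, LoopStr.mul_one] at this
  -- P = Q : (x * x^ρρ) * x = x * (x * x)
  have PQ : (x * rInv (rInv x)) * x = x * (x * x) := by
    have hP : rInv x * (((x * rInv (rInv x)) * x) * rInv x) = rInv (rInv x) :=
      S2 (rInv (rInv x))
    have hQ : rInv x * ((x * (x * x)) * rInv x) = rInv (rInv x) := by
      rw [S3 (x * x), K]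
    have := loop_left_cancel (rInv x) (hP.trans hQ.symm)
    exact loop_right_cancel (rInv x) this
  -- (x^λ \ x) * x = x * (x * x)
  have hL : (LoopStr.ldiv (lInv x) x) * x = x * (x * x) := by
    have := S1 x (LoopStr.ldiv (lInv x) x)
    rw [LoopStr.mul_ldiv] at this
    exact this.symm
  have hfin : LoopStr.ldiv (lInv x) x = x * rInv (rInv x) :=
    loop_right_cancel x (hL.trans PQ.symm)
  calc lInv x * (x * rInv (rInv x)) = lInv x * LoopStr.ldiv (lInv x) x := by rw [hfin]
    _ = x := LoopStr.mul_ldiv _ _
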